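/- Let α ∈ (0,1] and η = α/4. Suppose f_0, f_1, …, f_T : X → (0,1) is a sequence of measurable hypotheses such that ℓ_D(f_0;y) is finite and, for each t < T, f_{t+1} is the multiplicative-weights update of f_t by some measurable c_t : X → [−1,1] with step η satisfying E[c_t(x)·(f_t(x) − y(x))] ≥ α/2 (with ℓ_D(f_t;y) finite for each t). Then T ≤ 16·ℓ_D(f_0;y)/α². -/

import Mathlib

/-!
The expected cross-entropy loss is a potential. Writing `Z = 1 - f + f e^{-ηc}` for the
normaliser of the update, the loss changes pointwise by `η c y + log Z`, and
`log Z ≤ Z - 1 ≤ -η c f + η²` since `e^z ≤ 1 + z + z²` for `|z| ≤ 1`. Taking expectations,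
each round lowers the loss by at least `η α/2 - η² = α²/16`; as the loss is nonnegative,
there are at most `16 ℓ_D(f₀;y)/α²` rounds.
-/

open MeasureTheory Real Set

noncomputable def crossEntropy (y p : ℝ) : ℝ := -y * log p - (1 - y) * log (1 - p)

noncomputable def mwUpdate (η c p : ℝ) : ℝ := p * exp (-η * c) / (1 - p + p * exp (-η * c))

lemma crossEntropy_nonneg {y p : ℝ} (hy : y ∈ Icc 0 1) (hp : p ∈ Ioo 0 1) :
    0 ≤ crossEntropy y p := by
  have hlog : log p ≤ 0 := log_nonpos hp.1.le hp.2.le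
  have hlog' : log (1 - p) ≤ 0 := log_nonpos (by linarith [hp.2]) (by linarith [hp.1])
  unfold crossEntropy
  nlinarith [hy.1, hy.2]

lemma exp_le_one_add_add_sq {z : ℝ} (hz : |z| ≤ 1) : exp z ≤ 1 + z + z ^ 2 := by
  linarith [(abs_le.1 (abs_exp_sub_one_sub_id_le hz)).2]

lemma one_sub_add_mul_exp_pos {p : ℝ} (hp : p ∈ Icc 0 1) (z : ℝ) : 0 < 1 - p + p * exp z := by
  rcases hp.1.eq_or_lt with rfl | hp0
  · simp
  · nlinarith [mul_pos hp0 (exp_pos z), hp.2]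

lemma log_one_sub_add_mul_exp_le {p z : ℝ} (hp : p ∈ Icc 0 1) (hz : |z| ≤ 1) :
    log (1 - p + p * exp z) ≤ p * z + z ^ 2 :=
  calc log (1 - p + p * exp z) ≤ p * (exp z - 1) :=
        (log_le_sub_one_of_pos (one_sub_add_mul_exp_pos hp z)).trans_eq (by ring)
    _ ≤ p * (z + z ^ 2) :=
        mul_le_mul_of_nonneg_left (by linarith [exp_le_one_add_add_sq hz]) hp.1
    _ ≤ p * z + z ^ 2 := by nlinarith [hp.1, hp.2, sq_nonneg z]

lemma crossEntropy_mwUpdate (y η c : ℝ) {p : ℝ} (hp : p ∈ Ioo 0 1) :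
    crossEntropy y (mwUpdate η c p) =
      crossEntropy y p + η * c * y + log (1 - p + p * exp (-η * c)) := by
  have hZ := one_sub_add_mul_exp_pos (Ioo_subset_Icc_self hp) (-η * c)
  have h1p : 1 - mwUpdate η c p = (1 - p) / (1 - p + p * exp (-η * c)) := by
    rw [mwUpdate, eq_div_iff hZ.ne', sub_mul, div_mul_cancel₀ _ hZ.ne']
    ring
  unfold crossEntropy
  rw [h1p, mwUpdate, log_div (mul_pos hp.1 (exp_pos _)).ne' hZ.ne',
    log_div (by linarith [hp.2]) hZ.ne', log_mul hp.1.ne' (exp_pos _).ne', log_exp]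
  ring

lemma crossEntropy_mwUpdate_le (y : ℝ) {η c p : ℝ} (hp : p ∈ Ioo 0 1) (hηc : |η * c| ≤ 1) :
    crossEntropy y (mwUpdate η c p) ≤ crossEntropy y p - η * (c * (p - y)) + (η * c) ^ 2 := by
  have hlog := log_one_sub_add_mul_exp_le (Ioo_subset_Icc_self hp)
    (z := -η * c) (by rwa [neg_mul, abs_neg])
  rw [crossEntropy_mwUpdate y η c hp]
  linarith

section Expectation

variable {X : Type*} [MeasurableSpace X] {D : Measure X} [IsProbabilityMeasure D]

lemma integrable_mul_sub_of_mem_Icc {y p c : X → ℝ} (hy : Measurable y)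
    (hy01 : ∀ x, y x ∈ Icc 0 1) (hp : Measurable p) (hp01 : ∀ x, p x ∈ Ioo 0 1)
    (hc : Measurable c) (hc1 : ∀ x, c x ∈ Icc (-1) 1) :
    Integrable (fun x => c x * (p x - y x)) D := by
  refine .of_bound (hc.mul (hp.sub hy)).aestronglyMeasurable 1 (.of_forall fun x => ?_)
  rw [norm_mul, ← one_mul 1]
  refine mul_le_mul ?_ ?_ (norm_nonneg _) zero_le_one <;> rw [Real.norm_eq_abs, abs_le]
  · exact hc1 x
  · constructor <;> linarith [(hy01 x).1, (hy01 x).2, (hp01 x).1, (hp01 x).2]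

lemma integral_crossEntropy_mwUpdate_le {y p c : X → ℝ} {η : ℝ} (hy : Measurable y)
    (hy01 : ∀ x, y x ∈ Icc 0 1) (hp : Measurable p) (hp01 : ∀ x, p x ∈ Ioo 0 1)
    (hc : Measurable c) (hc1 : ∀ x, c x ∈ Icc (-1) 1) (hη : η ∈ Icc 0 1)
    (hℓ : Integrable (fun x => crossEntropy (y x) (p x)) D)
    (hℓ' : Integrable (fun x => crossEntropy (y x) (mwUpdate η (c x) (p x))) D) :
    ∫ x, crossEntropy (y x) (mwUpdate η (c x) (p x)) ∂D ≤
      ∫ x, crossEntropy (y x) (p x) ∂D - η * ∫ x, c x * (p x - y x) ∂D + η ^ 2 := by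
  have hcorr := (integrable_mul_sub_of_mem_Icc (D := D) hy hy01 hp hp01 hc hc1).const_mul η
  have hsub : Integrable (fun x => crossEntropy (y x) (p x) - η * (c x * (p x - y x))) D :=
    hℓ.sub hcorr
  have hpointwise : ∀ x, crossEntropy (y x) (mwUpdate η (c x) (p x)) ≤
      crossEntropy (y x) (p x) - η * (c x * (p x - y x)) + η ^ 2 := by
    intro x
    have hηc : |η * c x| ≤ 1 := by
      rw [abs_mul, abs_of_nonneg hη.1]
      exact mul_le_one₀ hη.2 (abs_nonneg _) (abs_le.2 (hc1 x))
    have hsq : (η * c x) ^ 2 ≤ η ^ 2 := by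
      have hc2 : c x ^ 2 ≤ 1 := by nlinarith [(hc1 x).1, (hc1 x).2]
      rw [mul_pow]
      nlinarith [sq_nonneg η]
    linarith [crossEntropy_mwUpdate_le (y x) (hp01 x) hηc]
  calc _ ≤ ∫ x, (crossEntropy (y x) (p x) - η * (c x * (p x - y x)) + η ^ 2) ∂D :=
        integral_mono hℓ' (hsub.add (integrable_const _)) hpointwise
    _ = _ := by
        rw [integral_add hsub (integrable_const _), integral_sub hℓ hcorr,
          integral_const_mul, integral_const, probReal_univ, one_smul]

end Expectation

lemma nat_mul_le_sub_of_forall_lt_le_sub {L : ℕ → ℝ} {δ : ℝ} {T : ℕ}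
    (h : ∀ t < T, L (t + 1) ≤ L t - δ) : T * δ ≤ L 0 - L T := by
  induction T with
  | zero => simp
  | succ n ih =>
    have := ih fun t ht => h t (by omega)
    push_cast
    linarith [h n n.lt_succ_self]

/-- Convergence of Multiaccuracy Boost: if every update has correlation at least
`α/2` with the residual, the number of iterations is at most `16·ℓ_D(f₀;y)/α²`. -/
theorem mw_convergence_iterations
    {X : Type*} [MeasurableSpace X] (D : Measure X) [IsProbabilityMeasure D]
    (y : X → ℝ) (hy : Measurable y) (hy01 : ∀ x, y x = 0 ∨ y x = 1)
    (α η : ℝ) (hα : α ∈ Set.Ioc (0 : ℝ) 1) (hη : η = α / 4)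
    (T : ℕ) (f : ℕ → X → ℝ) (c : ℕ → X → ℝ)
    (hfm : ∀ t ≤ T, Measurable (f t))
    (hf01 : ∀ t ≤ T, ∀ x, f t x ∈ Set.Ioo (0 : ℝ) 1)
    (hℓ : ∀ t ≤ T,
      Integrable (fun x => -(y x) * Real.log (f t x) - (1 - y x) * Real.log (1 - f t x)) D)
    (hcm : ∀ t < T, Measurable (c t))
    (hc1 : ∀ t < T, ∀ x, c t x ∈ Set.Icc (-1 : ℝ) 1)
    (hupd : ∀ t < T, ∀ x,
      f (t + 1) x = f t x * Real.exp (-η * c t x) / (1 - f t x + f t x * Real.exp (-η * c t x)))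
    (hcorr : ∀ t < T, ∫ x, c t x * (f t x - y x) ∂D ≥ α / 2) :
    (T : ℝ) ≤ 16 * (∫ x, (-(y x) * Real.log (f 0 x) - (1 - y x) * Real.log (1 - f 0 x)) ∂D) / α^2 := by
  obtain ⟨hα0, hα1⟩ := hα
  have hy01' : ∀ x, y x ∈ Icc 0 1 := fun x => by rcases hy01 x with h | h <;> simp [h]
  set L : ℕ → ℝ := fun t => ∫ x, crossEntropy (y x) (f t x) ∂D
  have hstep : ∀ t < T, L (t + 1) ≤ L t - α ^ 2 / 16 := by
    intro t ht
    have hf' : f (t + 1) = fun x => mwUpdate η (c t x) (f t x) := funext (hupd t ht)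
    have hdecr := integral_crossEntropy_mwUpdate_le hy hy01' (hfm t ht.le) (hf01 t ht.le)
      (hcm t ht) (hc1 t ht) ⟨by linarith, by linarith⟩ (hℓ t ht.le) (hf' ▸ hℓ (t + 1) ht)
    simp only [L, hf']
    nlinarith [hcorr t ht]
  have hLT : 0 ≤ L T := integral_nonneg fun x => crossEntropy_nonneg (hy01' x) (hf01 T le_rfl x)
  have hdesc := nat_mul_le_sub_of_forall_lt_le_sub hstep
  rw [le_div_iff₀ (by positivity)]
  change (T : ℝ) * α ^ 2 ≤ 16 * L 0
  linarith
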